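/- Let n ≥ 2 and let D ⊆ {2,…,n}. The chromatic number of the distance graph G(S_n, D) equals the product ∏_{d ∈ D} d. -/

import Mathlib

/-- The Rosenbloom–Tsfasman weight of a permutation `σ` of `{1,…,n}`:
the largest (1-based) index `i` with `σ(i) ≠ i`, and `0` for the identity. -/
def permRTWeight {n : ℕ} (σ : Equiv.Perm (Fin n)) : ℕ :=
  (Finset.univ.filter fun i => σ i ≠ i).sup fun i => i.val + 1

/-- The Rosenbloom–Tsfasman distance on `S_n`: `ρ(α,β) = ω(α⁻¹β)`. -/
def permRTDist {n : ℕ} (α β : Equiv.Perm (Fin n)) : ℕ := permRTWeight (α⁻¹ * β)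

/-- The distance graph `G(S_n, D)`: distinct `α, β` are adjacent iff `ρ(α,β) ∈ D`. -/
def permRTGraph (n : ℕ) (D : Finset ℕ) : SimpleGraph (Equiv.Perm (Fin n)) :=
  SimpleGraph.fromRel fun α β => permRTDist α β ∈ D

/-!
The Lehmer code `σ ↦ (rank of σ i among σ 0, …, σ i)ᵢ` is a bijection from `S_n` onto
`∏ i < n, Fin (i + 1)` which carries the RT distance on permutations to the RT distance
`max {i + 1 : c i ≠ c' i}` on codes: two permutations agreeing from position `i + 1` on map
`{0, …, i}` onto the same set, so their codes agree from `i + 1` on and differ at `i` exactly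
when the permutations do. On a product `∏ i < n, X i` with the RT distance, the projection onto
the coordinates `i` with `i + 1 ∈ D` is a proper colouring of the distance graph, and the
vectors constant outside these coordinates form a clique of the same size.
-/

open Finset

section RTDist

variable {n : ℕ} {X : Fin n → Type*} [∀ i, DecidableEq (X i)]

def rtDist (f g : ∀ i, X i) : ℕ :=
  (univ.filter fun i => f i ≠ g i).sup fun i => i.val + 1

theorem rtDist_le_iff {f g : ∀ i, X i} {k : ℕ} :
    rtDist f g ≤ k ↔ ∀ i : Fin n, k ≤ i → f i = g i := by
  simp only [rtDist, Finset.sup_le_iff, mem_filter, mem_univ, true_and]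
  refine ⟨fun h i hi => ?_, fun h i hne => ?_⟩
  · by_contra hne
    have := h i hne
    omega
  · by_contra hlt
    exact hne (h i (by omega))

theorem rtDist_comm (f g : ∀ i, X i) : rtDist f g = rtDist g f := by
  simp only [rtDist, ne_comm]

theorem rtDist_eq_zero_iff {f g : ∀ i, X i} : rtDist f g = 0 ↔ f = g := by
  rw [← Nat.le_zero, rtDist_le_iff, funext_iff]
  simp

theorem rtDist_congr {Y : Fin n → Type*} [∀ i, DecidableEq (Y i)] {f g : ∀ i, X i}
    {f' g' : ∀ i, Y i}
    (h : ∀ k : ℕ, (∀ i : Fin n, k ≤ i → f i = g i) ↔ ∀ i : Fin n, k ≤ i → f' i = g' i) :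
    rtDist f g = rtDist f' g' :=
  eq_of_forall_ge_iff fun k => by rw [rtDist_le_iff, rtDist_le_iff, h]

theorem exists_add_one_eq_rtDist_of_ne {f g : ∀ i, X i} (h : f ≠ g) :
    ∃ i : Fin n, i.val + 1 = rtDist f g ∧ f i ≠ g i := by
  obtain ⟨i, hi⟩ := Function.ne_iff.mp h
  obtain ⟨j, hj, hsup⟩ := exists_mem_eq_sup (univ.filter fun i => f i ≠ g i)
    ⟨i, by simpa using hi⟩ fun i => i.val + 1
  exact ⟨j, hsup.symm, (mem_filter.mp hj).2⟩

def rtGraph (D : Finset ℕ) : SimpleGraph (∀ i, X i) :=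
  SimpleGraph.fromRel fun f g => rtDist f g ∈ D

theorem rtGraph_adj {D : Finset ℕ} {f g : ∀ i, X i} :
    (rtGraph D).Adj f g ↔ f ≠ g ∧ rtDist f g ∈ D := by
  simp [rtGraph, rtDist_comm g f]

theorem rtGraph_chromaticNumber_le (D : Finset ℕ) [∀ i, Fintype (X i)] :
    (rtGraph (X := X) D).chromaticNumber ≤
      Fintype.card (∀ i : {i : Fin n // i.val + 1 ∈ D}, X i) := by
  let C : (rtGraph (X := X) D).Coloring (∀ i : {i : Fin n // i.val + 1 ∈ D}, X i) :=
    SimpleGraph.Coloring.mk (fun f i => f i) fun {f g} hadj hfg => by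
      obtain ⟨hne, hdist⟩ := rtGraph_adj.mp hadj
      obtain ⟨i, hi, hfgi⟩ := exists_add_one_eq_rtDist_of_ne hne
      exact hfgi (congr_fun hfg ⟨i, hi ▸ hdist⟩)
  exact C.colorable.chromaticNumber_le

theorem le_rtGraph_chromaticNumber (D : Finset ℕ) [∀ i, Fintype (X i)] [∀ i, Nonempty (X i)] :
    (Fintype.card (∀ i : {i : Fin n // i.val + 1 ∈ D}, X i) : ℕ∞) ≤
      (rtGraph (X := X) D).chromaticNumber := by
  let extend (c : ∀ i : {i : Fin n // i.val + 1 ∈ D}, X i) : ∀ i, X i :=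
    fun i => if h : i.val + 1 ∈ D then c ⟨i, h⟩ else Classical.arbitrary _
  refine SimpleGraph.le_chromaticNumber_of_pairwise_adj (Nat.card_eq_fintype_card).ge extend ?_
  intro c c' hcc'
  have hne : extend c ≠ extend c' := by
    obtain ⟨⟨i, hi⟩, hci⟩ := Function.ne_iff.mp hcc'
    exact Function.ne_iff.mpr ⟨i, by simpa [extend, hi] using hci⟩
  obtain ⟨i, hdist, hi⟩ := exists_add_one_eq_rtDist_of_ne hne
  have hiD : i.val + 1 ∈ D := by
    by_contra hiD
    simp [extend, hiD] at hi
  exact rtGraph_adj.mpr ⟨hne, hdist ▸ hiD⟩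

theorem rtGraph_chromaticNumber (D : Finset ℕ) [∀ i, Fintype (X i)] [∀ i, Nonempty (X i)] :
    (rtGraph (X := X) D).chromaticNumber =
      Fintype.card (∀ i : {i : Fin n // i.val + 1 ∈ D}, X i) :=
  le_antisymm (rtGraph_chromaticNumber_le D) (le_rtGraph_chromaticNumber D)

end RTDist

theorem Finset.injOn_card_filter_lt {α : Type*} [LinearOrder α] (s : Finset α) :
    Set.InjOn (fun a => #{x ∈ s | x < a}) s := by
  refine StrictMonoOn.injOn fun a ha b _ hab => card_lt_card ?_
  refine (ssubset_iff_of_subset fun x hx => ?_).mpr ⟨a, ?_, ?_⟩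
  · simp only [mem_filter] at hx ⊢
    exact ⟨hx.1, hx.2.trans hab⟩
  · simpa using ⟨ha, hab⟩
  · simp

theorem Equiv.Perm.image_eq_of_eqOn_compl {α : Type*} [DecidableEq α] (σ τ : Equiv.Perm α)
    {s : Finset α} (h : ∀ x ∉ s, σ x = τ x) : s.image σ = s.image τ := by
  apply coe_injective
  push_cast
  rw [← compl_compl (s : Set α), Set.image_compl_eq σ.bijective, Set.image_compl_eq τ.bijective,
    Set.image_congr (s := (s : Set α)ᶜ) fun x hx => h x hx]

section LehmerCode

variable {n : ℕ}

def lehmerCode (σ : Equiv.Perm (Fin n)) (i : Fin n) : Fin (i.val + 1) :=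
  ⟨#{j ∈ Iic i | σ j < σ i}, by
    rw [← Fin.card_Iic]
    exact card_lt_card (filter_ssubset.mpr ⟨i, mem_Iic.mpr le_rfl, lt_irrefl _⟩)⟩

theorem lehmerCode_val (σ : Equiv.Perm (Fin n)) (i : Fin n) :
    (lehmerCode σ i : ℕ) = #{x ∈ (Iic i).image σ | x < σ i} := by
  rw [filter_image, card_image_of_injective _ σ.injective]
  rfl

theorem lehmerCode_eq_of_eqOn_Ici {α β : Equiv.Perm (Fin n)} {i : Fin n}
    (h : ∀ j, i ≤ j → α j = β j) : lehmerCode α i = lehmerCode β i := by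
  have himage : (Iic i).image α = (Iic i).image β :=
    α.image_eq_of_eqOn_compl β fun j hj => h j (by simpa using hj : i < j).le
  exact Fin.ext (by rw [lehmerCode_val, lehmerCode_val, himage, h i le_rfl])

theorem lehmerCode_ne_of_eqOn_Ioi {α β : Equiv.Perm (Fin n)} {i : Fin n}
    (h : ∀ j, i < j → α j = β j) (hi : α i ≠ β i) : lehmerCode α i ≠ lehmerCode β i := by
  have himage : (Iic i).image α = (Iic i).image β :=
    α.image_eq_of_eqOn_compl β fun j hj => h j (by simpa using hj)
  intro hcode
  have hrank := congrArg Fin.val hcode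
  rw [lehmerCode_val, lehmerCode_val, himage] at hrank
  exact hi (((Iic i).image β).injOn_card_filter_lt
    (himage ▸ mem_image_of_mem α (mem_Iic.mpr le_rfl)) (mem_image_of_mem β (mem_Iic.mpr le_rfl))
    hrank)

theorem rtDist_lehmerCode (α β : Equiv.Perm (Fin n)) :
    rtDist (lehmerCode α) (lehmerCode β) = rtDist α β := by
  refine rtDist_congr fun k => ⟨fun h i => ?_, fun h i hi => ?_⟩
  · induction i using WellFoundedGT.induction with
    | _ i ih =>
      intro hki
      by_contra hne
      exact lehmerCode_ne_of_eqOn_Ioi (fun j hj => ih j hj (hki.trans hj.le)) hne (h i hki)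
  · exact lehmerCode_eq_of_eqOn_Ici fun j hj => h j (hi.trans hj)

theorem lehmerCode_injective : Function.Injective (lehmerCode (n := n)) := fun α β h => by
  have := rtDist_lehmerCode α β
  rw [h, rtDist_eq_zero_iff.mpr rfl, eq_comm, rtDist_eq_zero_iff] at this
  exact Equiv.ext (congr_fun this)

theorem lehmerCode_bijective : Function.Bijective (lehmerCode (n := n)) := by
  refine (Fintype.bijective_iff_injective_and_card _).mpr ⟨lehmerCode_injective, ?_⟩
  simp [Fintype.card_perm, Fintype.card_pi, Fin.prod_univ_eq_prod_range (· + 1),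
    prod_range_add_one_eq_factorial]

end LehmerCode

theorem permRTDist_eq_rtDist {n : ℕ} (α β : Equiv.Perm (Fin n)) :
    permRTDist α β = rtDist α β := by
  simp only [permRTDist, permRTWeight, rtDist, Equiv.Perm.mul_apply, ne_eq,
    Equiv.Perm.inv_eq_iff_eq, eq_comm (a := β _)]

noncomputable def permRTGraphIsoRTGraph (n : ℕ) (D : Finset ℕ) :
    permRTGraph n D ≃g rtGraph (X := fun i : Fin n => Fin (i.val + 1)) D where
  toEquiv := Equiv.ofBijective _ lehmerCode_bijective
  map_rel_iff' {α β} := by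
    simp only [Equiv.ofBijective_apply, rtGraph_adj, permRTGraph, SimpleGraph.fromRel_adj,
      permRTDist_eq_rtDist, rtDist_comm (β : Fin n → Fin n), rtDist_lehmerCode,
      lehmerCode_injective.ne_iff, or_self]

theorem prod_val_add_one_eq_prod {n : ℕ} {D : Finset ℕ} (hD : D ⊆ Icc 1 n) :
    ∏ i : {i : Fin n // i.val + 1 ∈ D}, (i.val.val + 1) = ∏ d ∈ D, d := by
  refine prod_bij (fun i _ => i.val.val + 1) (fun i _ => i.2)
    (fun i _ j _ h => Subtype.ext (Fin.ext (by omega))) (fun d hd => ?_) fun _ _ => rfl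
  have := mem_Icc.mp (hD hd)
  exact ⟨⟨⟨d - 1, by omega⟩, by simpa [show d - 1 + 1 = d by omega] using hd⟩, mem_univ _,
    by simp only; omega⟩

theorem permRTGraph_chromaticNumber_general (n : ℕ)
    (D : Finset ℕ) (hD : D ⊆ Finset.Icc 2 n) :
    (permRTGraph n D).chromaticNumber = (∏ d ∈ D, d : ℕ) := by
  rw [SimpleGraph.chromaticNumber_congr (permRTGraphIsoRTGraph n D), rtGraph_chromaticNumber,
    Fintype.card_pi]
  simp only [Fintype.card_fin]
  rw [prod_val_add_one_eq_prod (hD.trans (Icc_subset_Icc_left one_le_two))]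

/-- The chromatic number of `G(S_n, D)` is `∏_{d ∈ D} d`. -/
theorem permRTGraph_chromaticNumber (n : ℕ) (hn : 2 ≤ n)
    (D : Finset ℕ) (hD : D ⊆ Finset.Icc 2 n) :
    (permRTGraph n D).chromaticNumber = (∏ d ∈ D, d : ℕ) :=
  permRTGraph_chromaticNumber_general n D hD
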